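/- Let K be a simplicial complex over ℤ/2, σ ∈ K a simplex with no proper cofaces in K, and suppose no cycle of K contains σ. Then the inclusion-induced map H(K∖{σ}) → H(K) is surjective with one-dimensional kernel, the kernel being spanned by the class [∂σ] computed in K∖{σ}; moreover B(K∖{σ}) ⊊ B(K) with codimension 1. -/

import Mathlib

/-!
Since no cycle of `K` contains `σ`, the complexes `K` and `K ∖ {σ}` have the same cycles, while
the boundaries of `K` are those of `K ∖ {σ}` together with the line through `∂σ`. The chain `∂σ`
is a cycle of `K ∖ {σ}` (as `∂∂ = 0`) but not a boundary there: if `∂c = ∂σ` with `c` avoiding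
`σ`, then `c - σ` would be a cycle of `K` containing `σ`. So `H(K)` is `H(K ∖ {σ})` modulo the
class of `∂σ`, and `B(K)` is one dimension larger than `B(K ∖ {σ})`.
-/

/-- A simplex is a finite set of (natural-number) vertices. -/
abbrev Simplex : Type := Finset ℕ

/-- A chain over ℤ/2 (all degrees together) is a finitely supported
function from simplices to ℤ/2. -/
abbrev Chain : Type := Simplex →₀ ZMod 2

/-- A (finite) simplicial complex: a finite set of simplices closed under faces. -/
def IsComplex (K : Finset Simplex) : Prop := ∀ s ∈ K, ∀ t ⊆ s, t ∈ K

/-- Boundary of a single simplex over ℤ/2. -/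
noncomputable def bdrySimplex (s : Simplex) : Chain :=
  ∑ x ∈ s, Finsupp.single (s.erase x) 1

/-- The boundary operator on chains (all degrees), over ℤ/2. -/
noncomputable def bdry : Chain →ₗ[ZMod 2] Chain :=
  Finsupp.lsum (ZMod 2) fun s => LinearMap.toSpanSingleton (ZMod 2) Chain (bdrySimplex s)

/-- The chain group of a complex `K`: chains supported on `K`. -/
noncomputable def chainsOf (K : Finset Simplex) : Submodule (ZMod 2) Chain :=
  Finsupp.supported (ZMod 2) (ZMod 2) (↑K : Set Simplex)

/-- The cycle group `Z(K)` (all degrees). -/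
noncomputable def cyclesOf (K : Finset Simplex) : Submodule (ZMod 2) Chain :=
  chainsOf K ⊓ LinearMap.ker bdry

/-- The boundary group `B(K)` (all degrees). -/
noncomputable def bdriesOf (K : Finset Simplex) : Submodule (ZMod 2) Chain :=
  Submodule.map bdry (chainsOf K)

theorem chainsOf_mono {K K' : Finset Simplex} (h : K ⊆ K') : chainsOf K ≤ chainsOf K' :=
  Finsupp.supported_mono (by exact_mod_cast h)

theorem cyclesOf_mono {K K' : Finset Simplex} (h : K ⊆ K') : cyclesOf K ≤ cyclesOf K' :=
  inf_le_inf_right _ (chainsOf_mono h)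

theorem bdriesOf_mono {K K' : Finset Simplex} (h : K ⊆ K') : bdriesOf K ≤ bdriesOf K' :=
  Submodule.map_mono (chainsOf_mono h)

/-- `B(K)` viewed inside `Z(K)`. -/
noncomputable def homologyRel (K : Finset Simplex) : Submodule (ZMod 2) (cyclesOf K) :=
  (bdriesOf K).comap (cyclesOf K).subtype

/-- The homology `H(K) = Z(K)/B(K)` over ℤ/2, all degrees summed. -/
noncomputable abbrev homology (K : Finset Simplex) :=
  cyclesOf K ⧸ homologyRel K

/-- The inclusion-induced map on homology. -/
noncomputable def inducedH {K K' : Finset Simplex} (h : K ⊆ K') :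
    homology K →ₗ[ZMod 2] homology K' :=
  Submodule.mapQ _ _ (Submodule.inclusion (cyclesOf_mono h)) (by
    intro x hx
    simp only [homologyRel, Submodule.mem_comap, Submodule.coe_subtype,
      Submodule.coe_inclusion] at hx ⊢
    exact bdriesOf_mono h hx)

open Classical in
/-- The homology class of a chain (zero if the chain is not a cycle of `K`). -/
noncomputable def hclass (K : Finset Simplex) (c : Chain) : homology K :=
  if h : c ∈ cyclesOf K then Submodule.Quotient.mk ⟨c, h⟩ else 0


theorem eraseSubset (K : Finset Simplex) (σ : Simplex) : K.erase σ ⊆ K :=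
  fun _ hx => Finset.mem_of_mem_erase hx

section LinearAlgebra

variable {R M : Type*} [Ring R] [AddCommGroup M] [Module R M]

theorem Submodule.comap_subtype_sup_span_singleton (Z B : Submodule R M) {v : M} (hv : v ∈ Z) :
    (B ⊔ span R {v}).comap Z.subtype = B.comap Z.subtype ⊔ span R {⟨v, hv⟩} := by
  refine map_injective_of_injective Z.injective_subtype ?_
  have hvZ : span R {v} ≤ Z := (span_singleton_le_iff_mem _ _).2 hv
  rw [map_comap_subtype, map_sup, map_comap_subtype, map_span, Set.image_singleton,
    inf_comm, sup_comm, sup_inf_assoc_of_le _ hvZ, sup_comm, inf_comm]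
  rfl

theorem Submodule.finrank_sup_span_singleton_of_notMem {K V : Type*} [DivisionRing K]
    [AddCommGroup V] [Module K V] {p : Submodule K V} [FiniteDimensional K p] {v : V}
    (hv : v ∉ p) : Module.finrank K ↥(p ⊔ span K {v}) = Module.finrank K p + 1 := by
  have hv0 : v ≠ 0 := fun h => hv (h ▸ p.zero_mem)
  have := finrank_sup_add_finrank_inf_eq p (span K {v})
  rwa [(disjoint_span_singleton_of_notMem hv).eq_bot, finrank_bot, add_zero,
    finrank_span_singleton hv0] at this

end LinearAlgebra

theorem bdry_single (s : Simplex) (a : ZMod 2) :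
    bdry (Finsupp.single s a) = a • bdrySimplex s := by
  simp [bdry]

theorem ssubset_of_mem_support_bdrySimplex {s t : Simplex} (ht : t ∈ (bdrySimplex s).support) :
    t ⊂ s := by
  obtain ⟨x, hx, hxt⟩ := Finset.mem_biUnion.1 (Finsupp.support_finsetSum ht)
  rw [Finset.mem_singleton.1 (Finsupp.support_single_subset hxt)]
  exact Finset.erase_ssubset hx

theorem bdry_bdrySimplex (s : Simplex) : bdry (bdrySimplex s) = 0 := by
  simp only [bdrySimplex, map_sum, bdry_single, one_smul, Finset.sum_sigma']
  refine Finset.sum_involution (fun p _ => ⟨p.2, p.1⟩) ?_ ?_ ?_ (fun _ _ => rfl) <;>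
    simp only [Finset.mem_sigma, Finset.mem_erase, Sigma.forall]
  · intro x y _
    rw [Finset.erase_right_comm, ← Finsupp.single_add, show (1 + 1 : ZMod 2) = 0 from rfl,
      Finsupp.single_zero]
  · intro x y hxy _ hyx
    exact absurd (Sigma.mk.inj hyx).1 hxy.2.1
  · intro x y hxy
    exact ⟨hxy.2.2, Ne.symm hxy.2.1, hxy.1⟩

theorem bdrySimplex_mem_cyclesOf_erase {K : Finset Simplex} (hK : IsComplex K) {σ : Simplex}
    (hσ : σ ∈ K) : bdrySimplex σ ∈ cyclesOf (K.erase σ) := by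
  refine ⟨fun t ht => ?_, bdry_bdrySimplex σ⟩
  have hts := ssubset_of_mem_support_bdrySimplex ht
  exact Finset.mem_erase.2 ⟨hts.ne, hK σ hσ t hts.subset⟩

theorem chainsOf_insert (K : Finset Simplex) (σ : Simplex) :
    chainsOf (insert σ K) = chainsOf K ⊔ Submodule.span (ZMod 2) {Finsupp.single σ 1} := by
  rw [chainsOf, Finset.coe_insert, Set.insert_eq, Finsupp.supported_union, sup_comm,
    Finsupp.supported_eq_span_single (R := ZMod 2) ({σ} : Set Simplex), Set.image_singleton]
  rfl

theorem bdriesOf_insert (K : Finset Simplex) (σ : Simplex) :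
    bdriesOf (insert σ K) = bdriesOf K ⊔ Submodule.span (ZMod 2) {bdrySimplex σ} := by
  rw [bdriesOf, chainsOf_insert, Submodule.map_sup, Submodule.map_span, Set.image_singleton,
    bdry_single, one_smul]
  rfl

theorem cyclesOf_erase_eq {K : Finset Simplex} {σ : Simplex}
    (hnc : ∀ z ∈ cyclesOf K, σ ∉ z.support) : cyclesOf (K.erase σ) = cyclesOf K := by
  refine le_antisymm (cyclesOf_mono (eraseSubset K σ)) fun z hz => ⟨fun t ht => ?_, hz.2⟩
  exact Finset.mem_erase.2 ⟨fun h => hnc z hz (h ▸ ht), hz.1 ht⟩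

theorem bdrySimplex_notMem_bdriesOf_erase {K : Finset Simplex} {σ : Simplex} (hσ : σ ∈ K)
    (hnc : ∀ z ∈ cyclesOf K, σ ∉ z.support) : bdrySimplex σ ∉ bdriesOf (K.erase σ) := by
  rintro ⟨c, hc, hcσ⟩
  have hc' : c σ = 0 := Finsupp.notMem_support_iff.1 fun h => (Finset.mem_erase.1 (hc h)).1 rfl
  refine hnc (c - Finsupp.single σ 1) ⟨?_, ?_⟩ ?_
  · exact sub_mem (chainsOf_mono (eraseSubset K σ) hc) (Finsupp.single_mem_supported _ _ hσ)
  · change bdry _ = 0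
    rw [map_sub, hcσ, bdry_single, one_smul, sub_self]
  · simp [hc']

theorem hclass_of_mem {K : Finset Simplex} {c : Chain} (hc : c ∈ cyclesOf K) :
    hclass K c = Submodule.Quotient.mk ⟨c, hc⟩ :=
  dif_pos hc

theorem inducedH_surjective {K K' : Finset Simplex} (h : K ⊆ K')
    (hZ : cyclesOf K' ≤ cyclesOf K) : Function.Surjective (inducedH h) := by
  intro q
  obtain ⟨⟨z, hz⟩, rfl⟩ := Submodule.Quotient.mk_surjective _ q
  exact ⟨Submodule.Quotient.mk ⟨z, hZ hz⟩, rfl⟩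

theorem ker_inducedH {K K' : Finset Simplex} (h : K ⊆ K') :
    LinearMap.ker (inducedH h) =
      ((bdriesOf K').comap (cyclesOf K).subtype).map (homologyRel K).mkQ :=
  Submodule.ker_mapQ _ _ _ _

theorem ker_inducedH_of_bdriesOf_eq_sup {K K' : Finset Simplex} (h : K ⊆ K') {v : Chain}
    (hv : v ∈ cyclesOf K) (hB : bdriesOf K' = bdriesOf K ⊔ Submodule.span (ZMod 2) {v}) :
    LinearMap.ker (inducedH h) = Submodule.span (ZMod 2) {hclass K v} := by
  rw [ker_inducedH, hB, Submodule.comap_subtype_sup_span_singleton _ _ hv, Submodule.map_sup,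
    Submodule.map_span, Set.image_singleton, ← homologyRel, Submodule.mkQ_map_self, bot_sup_eq,
    hclass_of_mem hv]
  rfl

instance (K : Finset Simplex) : Module.Finite (ZMod 2) (chainsOf K) :=
  Module.Finite.equiv (Finsupp.supportedEquivFinsupp (K : Set Simplex)).symm

instance (K : Finset Simplex) : Module.Finite (ZMod 2) (bdriesOf K) :=
  inferInstanceAs (Module.Finite (ZMod 2) ((chainsOf K).map bdry))

theorem stmt15_general (K : Finset Simplex) (hK : IsComplex K) (σ : Simplex) (hσ : σ ∈ K)
    (hnc : ∀ z ∈ cyclesOf K, σ ∉ z.support) :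
    Function.Surjective (inducedH (eraseSubset K σ)) ∧
    LinearMap.ker (inducedH (eraseSubset K σ))
      = Submodule.span (ZMod 2)
          {hclass (K.erase σ) (bdry (Finsupp.single σ 1))} ∧
    bdriesOf (K.erase σ) < bdriesOf K ∧
    Module.finrank (ZMod 2) (bdriesOf K)
      = Module.finrank (ZMod 2) (bdriesOf (K.erase σ)) + 1 := by
  have hB : bdriesOf K = bdriesOf (K.erase σ) ⊔ Submodule.span (ZMod 2) {bdrySimplex σ} := by
    rw [← bdriesOf_insert, Finset.insert_erase hσ]
  have hnotMem := bdrySimplex_notMem_bdriesOf_erase hσ hnc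
  refine ⟨inducedH_surjective _ (cyclesOf_erase_eq hnc).ge, ?_, ?_, ?_⟩
  · rw [bdry_single, one_smul]
    exact ker_inducedH_of_bdriesOf_eq_sup _ (bdrySimplex_mem_cyclesOf_erase hK hσ) hB
  · rw [hB]
    exact Submodule.lt_sup_iff_notMem.2 hnotMem
  · rw [hB]
    exact Submodule.finrank_sup_span_singleton_of_notMem hnotMem

/-- if `σ` is a maximal simplex of `K` contained in no cycle of `K`,
then `H(K∖{σ}) → H(K)` is surjective with one-dimensional kernel spanned by `[∂σ]`
(computed in `K∖{σ}`), and `B(K∖{σ}) ⊊ B(K)` has codimension 1. -/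
theorem stmt15 (K : Finset Simplex) (hK : IsComplex K) (σ : Simplex) (hσ : σ ∈ K)
    (hmax : ∀ τ ∈ K, σ ⊆ τ → τ = σ)
    (hnc : ∀ z ∈ cyclesOf K, σ ∉ z.support) :
    Function.Surjective (inducedH (eraseSubset K σ)) ∧
    LinearMap.ker (inducedH (eraseSubset K σ))
      = Submodule.span (ZMod 2)
          {hclass (K.erase σ) (bdry (Finsupp.single σ 1))} ∧
    bdriesOf (K.erase σ) < bdriesOf K ∧
    Module.finrank (ZMod 2) (bdriesOf K)
      = Module.finrank (ZMod 2) (bdriesOf (K.erase σ)) + 1 :=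
  stmt15_general K hK σ hσ hnc
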